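/- ∂̄-equation for the complex stream pair: Let B ⊂ ℝ² be open, φ ∈ L^∞(B) with φ ≥ 1/2, v ∈ H¹_loc(B) and Ŵ = (Ŵ₁, Ŵ₂) ∈ L^∞(B;ℝ²). Suppose ṽ ∈ H¹_loc(B) satisfies φ²(∂_x v + Ŵ₁v) = ∂_y ṽ and φ²(∂_y v + Ŵ₂v) = −∂_x ṽ in B. Then w = v + iṽ satisfies the Beltrami-type equation ∂_z̄ w = μ ∂_z w − Ŵ° v in B, where μ = ((1−φ²)/(1+φ²))·(∂_x v + i∂_y v)/(∂_x v − i∂_y v) when ∇v ≠ 0 (μ = 0 otherwise), and Ŵ° = φ²Ŵ₁(1+μ)/2 + iφ²Ŵ₂(1−μ)/2. Moreover |μ| ≤ ‖(1−φ²)/(1+φ²)‖_∞ pointwise. -/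

import Mathlib

open Metric Complex

noncomputable section

/-- The partial derivative `∂_x` of a complex-valued function on `ℂ ≅ ℝ²`. -/
def dxC (g : ℂ → ℂ) (z : ℂ) : ℂ := fderiv ℝ g z 1

/-- The partial derivative `∂_y` of a complex-valued function on `ℂ ≅ ℝ²`. -/
def dyC (g : ℂ → ℂ) (z : ℂ) : ℂ := fderiv ℝ g z Complex.I

/-- The partial derivative `∂_x` of a real-valued function on `ℂ ≅ ℝ²`. -/
def dxR (g : ℂ → ℝ) (z : ℂ) : ℝ := fderiv ℝ g z 1

/-- The partial derivative `∂_y` of a real-valued function on `ℂ ≅ ℝ²`. -/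
def dyR (g : ℂ → ℝ) (z : ℂ) : ℝ := fderiv ℝ g z Complex.I

/-- `∂̄`-equation for the complex stream pair: if `vt` is a stream function for
`φ²(∇v + Ŵv)`, then `w = v + ivt` satisfies `∂_z̄ w = μ ∂_z w - Ŵ° v` with
`|μ| ≤ |(1-φ²)/(1+φ²)|`. -/
theorem stmt19 (B : Set ℂ) (hB : IsOpen B)
    (φ v vt W1 W2 : ℂ → ℝ)
    (hφ : ∀ z ∈ B, (1/2 : ℝ) ≤ φ z)
    (hv : ∀ z ∈ B, DifferentiableAt ℝ v z)
    (hvt : ∀ z ∈ B, DifferentiableAt ℝ vt z)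
    (hs1 : ∀ z ∈ B, (φ z)^2 * (dxR v z + W1 z * v z) = dyR vt z)
    (hs2 : ∀ z ∈ B, (φ z)^2 * (dyR v z + W2 z * v z) = -dxR vt z) :
    ∀ z ∈ B,
      let w : ℂ → ℂ := fun ζ => (v ζ : ℂ) + Complex.I * (vt ζ : ℂ)
      let μ : ℂ :=
        if (dxR v z, dyR v z) ≠ ((0:ℝ), (0:ℝ)) then
          (((1 - (φ z)^2) / (1 + (φ z)^2) : ℝ) : ℂ) *
            (((dxR v z : ℂ) + Complex.I * (dyR v z : ℂ)) /
              ((dxR v z : ℂ) - Complex.I * (dyR v z : ℂ)))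
        else 0
      let Wd : ℂ :=
        (((φ z)^2 * W1 z : ℝ) : ℂ) * (1 + μ) / 2
          + Complex.I * (((φ z)^2 * W2 z : ℝ) : ℂ) * (1 - μ) / 2
      ((dxC w z + Complex.I * dyC w z) / 2
          = μ * ((dxC w z - Complex.I * dyC w z) / 2) - Wd * (v z : ℂ))
        ∧ ‖μ‖ ≤ |(1 - (φ z)^2) / (1 + (φ z)^2)| := by
  intro z hz
  intro w μ Wd
  have hdv := hv z hz
  have hdvt := hvt z hz
  have h1 : HasFDerivAt (fun ζ => ((v ζ : ℝ) : ℂ))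
      (Complex.ofRealCLM.comp (fderiv ℝ v z)) z :=
    Complex.ofRealCLM.hasFDerivAt.comp z hdv.hasFDerivAt
  have h2 : HasFDerivAt (fun ζ => ((vt ζ : ℝ) : ℂ))
      (Complex.ofRealCLM.comp (fderiv ℝ vt z)) z :=
    Complex.ofRealCLM.hasFDerivAt.comp z hdvt.hasFDerivAt
  have hw : HasFDerivAt w
      ((Complex.ofRealCLM.comp (fderiv ℝ v z)) +
        Complex.I • (Complex.ofRealCLM.comp (fderiv ℝ vt z))) z := by
    exact h1.add (h2.const_smul Complex.I)
  have hdx : dxC w z = (dxR v z : ℂ) + Complex.I * (dxR vt z : ℂ) := by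
    simp [dxC, dxR, hw.fderiv, smul_eq_mul]
  have hdy : dyC w z = (dyR v z : ℂ) + Complex.I * (dyR vt z : ℂ) := by
    simp [dyC, dyR, hw.fderiv, smul_eq_mul]
  have e1 : dyR vt z = (φ z)^2 * (dxR v z + W1 z * v z) := (hs1 z hz).symm
  have e2 : dxR vt z = -((φ z)^2 * (dyR v z + W2 z * v z)) := by
    have := hs2 z hz; linarith
  have hI2 : Complex.I ^ 2 = -1 := Complex.I_sq
  have hI3 : Complex.I ^ 3 = -Complex.I := by rw [pow_succ, Complex.I_sq]; ring
  have hp0 : (0:ℝ) < (φ z)^2 := by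
    have := hφ z hz; positivity
  have hp1 : (1 + (φ z)^2 : ℝ) ≠ 0 := by positivity
  have hp1' : ((1:ℂ) + ((φ z):ℂ)^2) ≠ 0 := by
    intro h
    apply hp1
    exact_mod_cast congrArg Complex.re h
  by_cases hab : (dxR v z, dyR v z) ≠ ((0:ℝ), (0:ℝ))
  · have hden : ((dxR v z : ℂ) - Complex.I * (dyR v z : ℂ)) ≠ 0 := by
      intro h
      apply hab
      have hre := congrArg Complex.re h
      have him := congrArg Complex.im h
      simp at hre him
      exact Prod.ext hre him
    have hden' : ((dxR v z : ℂ) + Complex.I * (dyR v z : ℂ)) ≠ 0 := by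
      intro h
      apply hab
      have hre := congrArg Complex.re h
      have him := congrArg Complex.im h
      simp at hre him
      exact Prod.ext hre him
    have hμ : μ = (((1 - (φ z)^2) / (1 + (φ z)^2) : ℝ) : ℂ) *
        (((dxR v z : ℂ) + Complex.I * (dyR v z : ℂ)) /
          ((dxR v z : ℂ) - Complex.I * (dyR v z : ℂ))) := by
      simp only [μ, if_pos hab]
    constructor
    · rw [hdx, hdy, e1, e2]
      simp only [Wd, hμ]
      push_cast
      field_simp [hden, hp1']
      ring_nf
      simp only [hI2, hI3]
      ring
    · rw [hμ, norm_mul, norm_div]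
      have habs : ‖((dxR v z : ℂ) - Complex.I * (dyR v z : ℂ))‖
          = ‖((dxR v z : ℂ) + Complex.I * (dyR v z : ℂ))‖ := by
        have hc : ((dxR v z : ℂ) - Complex.I * (dyR v z : ℂ))
            = starRingEnd ℂ ((dxR v z : ℂ) + Complex.I * (dyR v z : ℂ)) := by
          simp [Complex.ext_iff]
        rw [hc, Complex.norm_conj]
      rw [habs, div_self (by simpa using norm_ne_zero_iff.mpr hden'), mul_one,
        Complex.norm_real, Real.norm_eq_abs]
  · have hμ : μ = 0 := by simp only [μ, if_neg hab]
    have hab' : dxR v z = 0 ∧ dyR v z = 0 := by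
      by_contra h
      exact hab (by simpa [Prod.ext_iff] using fun h1 h2 => h ⟨h1, h2⟩)
    constructor
    · rw [hdx, hdy, e1, e2]
      simp only [Wd, hμ, hab'.1, hab'.2]
      push_cast
      ring_nf
      simp only [hI2, hI3]
      ring
    · simp [hμ]
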